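/- arXiv:1304.0246 — 3 statements merged into one kernel-verified Lean document; each statement's English description precedes it below -/
import Mathlib

section
/- On the tree, for every integer L ≥ 2 and every x ∈ [0,1], the second moment of the number of open paths is E^x(Θ²) = Σ_{q=0}^{L−2} a(L,q)·(1−x)^{2L−q−2} + L·(1−x)^{L−1}. -/
open MeasureTheory Real Filter Topology ProbabilityTheory

noncomputable section

/-- The uniform probability measure on `[0,1]`. -/
def unif : Measure ℝ := volume.restrict (Set.Icc (0:ℝ) 1)

/-! ### The hypercube model -/

/-- Sample space for the hypercube model: an independent value for each vertex of `{0,1}^L`.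
(The values carried by the two corners `(0,…,0)` and `(1,…,1)` are never used: they are
overridden by `x` and `1` respectively in `hcPathVal`.) -/
abbrev HCOmega (L : ℕ) := (Fin L → Bool) → ℝ

/-- The product of uniform measures: all vertex values are i.i.d. uniform on `[0,1]`. -/
def hcMeasure (L : ℕ) : Measure (HCOmega L) := Measure.pi fun _ => unif

instance (L : ℕ) : IsProbabilityMeasure (hcMeasure L) := by
  have : IsProbabilityMeasure unif := by
    constructor
    simp [unif, Real.volume_Icc]
  exact MeasureTheory.Measure.pi.instIsProbabilityMeasure _

/-- The vertex reached after `i` steps along the directed path determined by the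
permutation `g` (at step `m` the coordinate `g m` is flipped from `0` to `1`):
coordinate `j` equals `1` iff `g.symm j < i`. -/
def hcVertex (L : ℕ) (g : Equiv.Perm (Fin L)) (i : ℕ) : Fin L → Bool :=
  fun j => decide ((g.symm j : ℕ) < i)

/-- The value seen after `i` steps along the path `g`: the starting corner carries `x`,
the final corner carries `1`, and every other vertex carries its random value. -/
def hcPathVal (L : ℕ) (x : ℝ) (ω : HCOmega L) (g : Equiv.Perm (Fin L)) (i : ℕ) : ℝ :=
  if i = 0 then x else if L ≤ i then 1 else ω (hcVertex L g i)

/-- A directed path is open when the `L+1` values along it are strictly increasing. -/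
def hcOpenPath (L : ℕ) (x : ℝ) (ω : HCOmega L) (g : Equiv.Perm (Fin L)) : Prop :=
  ∀ i < L, hcPathVal L x ω g i < hcPathVal L x ω g (i+1)

open Classical in
/-- `Θ`, the number of open directed paths on the hypercube. -/
def hcTheta (L : ℕ) (x : ℝ) (ω : HCOmega L) : ℕ :=
  (Finset.univ.filter fun g : Equiv.Perm (Fin L) => hcOpenPath L x ω g).card

/-- `E^x(Θ)` on the hypercube. -/
def hcE (L : ℕ) (x : ℝ) : ℝ := ∫ ω, (hcTheta L x ω : ℝ) ∂ hcMeasure L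

/-! ### The tree model -/

/-- Index type for the nodes of the tree: a node at level `k` is a sequence of `k`
elements of `{1,…,L}` (only duplicate-free sequences correspond to actual vertices;
the values attached to the other indices are unused dummies). -/
abbrev TreeNode (L : ℕ) := Σ k : Fin (L+1), (Fin (k : ℕ) → Fin L)

/-- Sample space for the tree model: an independent value for each node. -/
abbrev TreeOmega (L : ℕ) := TreeNode L → ℝ

/-- All node values are i.i.d. uniform on `[0,1]`. -/
def treeMeasure (L : ℕ) : Measure (TreeOmega L) := Measure.pi fun _ => unif

instance (L : ℕ) : IsProbabilityMeasure (treeMeasure L) := by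
  have : IsProbabilityMeasure unif := by
    constructor
    simp [unif, Real.volume_Icc]
  exact MeasureTheory.Measure.pi.instIsProbabilityMeasure _

/-- The value seen at level `k` along the root-to-leaf path determined by the
permutation `g` (whose level-`k` vertex is the prefix `(g 0, …, g (k-1))`):
the root carries `x`, the leaves carry `1`, the other vertices their random values. -/
def treePathVal (L : ℕ) (x : ℝ) (ω : TreeOmega L) (g : Equiv.Perm (Fin L)) (k : ℕ) : ℝ :=
  if h : k < L then
    if k = 0 then x
    else ω ⟨⟨k, Nat.lt_succ_of_lt h⟩, fun i => g ⟨(i : ℕ), lt_trans i.isLt h⟩⟩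
  else 1

/-- A root-to-leaf path is open when the `L+1` values along it are strictly increasing. -/
def treeOpenPath (L : ℕ) (x : ℝ) (ω : TreeOmega L) (g : Equiv.Perm (Fin L)) : Prop :=
  ∀ k < L, treePathVal L x ω g k < treePathVal L x ω g (k+1)

open Classical in
/-- `Θ`, the number of open root-to-leaf paths on the tree. -/
def treeTheta (L : ℕ) (x : ℝ) (ω : TreeOmega L) : ℕ :=
  (Finset.univ.filter fun g : Equiv.Perm (Fin L) => treeOpenPath L x ω g).card

/-- `E^x(Θ)` on the tree. -/
def treeE (L : ℕ) (x : ℝ) : ℝ := ∫ ω, (treeTheta L x ω : ℝ) ∂ treeMeasure L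


/-- The σ-algebra `F_k` on the tree: generated by the values carried by the (actual,
duplicate-free) vertices at levels `1` through `k`. -/
def treeF (L k : ℕ) : MeasurableSpace (TreeOmega L) :=
  MeasurableSpace.comap
    (fun ω (n : {n : TreeNode L // 1 ≤ (n.1 : ℕ) ∧ (n.1 : ℕ) ≤ k ∧ Function.Injective n.2}) =>
      ω n.1)
    inferInstance

/-- Number of coordinates equal to `1`, i.e. the Hamming distance from `(0,…,0)`. -/
def hcWeight {L : ℕ} (v : Fin L → Bool) : ℕ := (Finset.univ.filter fun j => v j = true).card

/-- The σ-algebra `F_k` on the hypercube: generated by the values carried by the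
(random) vertices at Hamming distance at most `k` from either corner. -/
def hcF (L k : ℕ) : MeasurableSpace (HCOmega L) :=
  MeasurableSpace.comap
    (fun ω (v : {v : Fin L → Bool // (v ≠ fun _ => false) ∧ (v ≠ fun _ => true) ∧
        (hcWeight v ≤ k ∨ L - k ≤ hcWeight v)}) => ω v.1)
    inferInstance

/-- The coefficients `a(L,q) = L!·(2L−2q−2)! / ((L−q−2)!·(2L−q−2)!)`. -/
def aCoef (L q : ℕ) : ℝ :=
  ((Nat.factorial L : ℝ) * (Nat.factorial (2*L - 2*q - 2) : ℝ)) /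
    ((Nat.factorial (L - q - 2) : ℝ) * (Nat.factorial (2*L - q - 2) : ℝ))

/-- `q₀(L) = ⌈ln(L²)/ln 2 + 1⌉`. -/
def q0 (L : ℕ) : ℕ := ⌈Real.log ((L:ℝ)^2) / Real.log 2 + 1⌉₊

/-- The sequence of functions `F_k`: `F_0(z) = e^{−z}` and
`F_k(z) = exp(−∫_0^z (1 − F_{k−1}(t))/t dt)`. (The value of the integrand at the single
point `t = 0` is irrelevant for the integral, so Lean's `x/0 = 0` convention agrees with
the continuous extension of the integrand.) -/
def Fseq : ℕ → ℝ → ℝ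
  | 0 => fun z => Real.exp (-z)
  | (k+1) => fun z => Real.exp (-(∫ t in (0:ℝ)..z, (1 - Fseq k t) / t))

/-- The standard exponential distribution, with density `e^{−t}` on `[0,∞)`. -/
def stdExp : Measure ℝ :=
  (volume.restrict (Set.Ici (0:ℝ))).withDensity fun t => ENNReal.ofReal (Real.exp (-t))


/-!
Squaring `Θ = ∑_g 1[path g open]` gives `E^x(Θ²) = ∑_{g, g'} P^x(paths g and g' both open)`.
The paths of `g` and `g'` share their random vertices at levels `1, …, q` and have disjoint
random vertices at the `m = L - 1 - q` levels above. Given shared values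
`x < u₁ < ⋯ < u_q < 1`, the two tails are independent increasing chains from `u_q` to `1`, each of
probability `(1 - u_q)^m / m!`, and integrating `(1 - u_q)^{2m}` over the shared chain gives
`(1 - x)^{2m+q} (2m)! / (m!² (2m+q)!)`. For fixed `g`, the shared depth `q < L - 1` is attained by
`(L - q)! - (L - q - 1)!` permutations `g'` and `q = L - 1` only by `g' = g`.
-/

open Set
open scoped Nat

instance : IsProbabilityMeasure unif := ⟨by simp [unif]⟩

open Classical in
lemma integral_card_sq {Ω ι : Type*} [MeasurableSpace Ω] [Fintype ι] {μ : Measure Ω}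
    [IsFiniteMeasure μ] {A : ι → Set Ω} (hA : ∀ i, MeasurableSet (A i)) :
    ∫ ω, ((Finset.univ.filter fun i => ω ∈ A i).card : ℝ) ^ 2 ∂μ =
      ∑ i, ∑ j, μ.real (A i ∩ A j) := by
  have hcard : ∀ ω, ((Finset.univ.filter fun i => ω ∈ A i).card : ℝ) ^ 2 =
      ∑ i, ∑ j, (A i ∩ A j).indicator 1 ω := by
    intro ω
    simp only [Finset.card_filter, Nat.cast_sum, Nat.cast_ite, Nat.cast_one, Nat.cast_zero, sq,
      Finset.sum_mul_sum, indicator_apply, Pi.one_apply, mem_inter_iff]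
    refine Finset.sum_congr rfl fun i _ => Finset.sum_congr rfl fun j _ => ?_
    by_cases hi : ω ∈ A i <;> by_cases hj : ω ∈ A j <;> simp [hi, hj]
  have hint : ∀ i j, Integrable ((A i ∩ A j).indicator (1 : Ω → ℝ)) μ := fun i j =>
    (integrable_const 1).indicator ((hA i).inter (hA j))
  simp_rw [hcard]
  rw [integral_finsetSum _ fun i _ => integrable_finsetSum _ fun j _ => hint i j]
  refine Finset.sum_congr rfl fun i _ => ?_
  rw [integral_finsetSum _ fun j _ => hint i j]
  exact Finset.sum_congr rfl fun j _ => integral_indicator_one ((hA i).inter (hA j))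

lemma measurePreserving_comp_of_injective {ι κ α : Type*} [Fintype ι] [Fintype κ]
    [MeasurableSpace α] (μ : Measure α) [IsProbabilityMeasure μ] {f : κ → ι}
    (hf : Function.Injective f) :
    MeasurePreserving (fun ω : ι → α => ω ∘ f)
      (Measure.pi fun _ => μ) (Measure.pi fun _ => μ) := by
  classical
  have hmeas : Measurable fun ω : ι → α => ω ∘ f :=
    measurable_pi_iff.2 fun k => measurable_pi_apply (f k)
  refine ⟨hmeas, (Measure.pi_eq fun s hs => ?_).symm⟩
  have hpre : (fun ω : ι → α => ω ∘ f) ⁻¹' univ.pi s =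
      univ.pi (Function.extend f s fun _ => univ) := by
    ext ω
    simp only [mem_preimage, mem_univ_pi, Function.comp_apply]
    refine ⟨fun h i => ?_, fun h k => by simpa [hf.extend_apply] using h (f k)⟩
    by_cases hi : ∃ k, f k = i
    · obtain ⟨k, rfl⟩ := hi
      simpa [hf.extend_apply] using h k
    · simp [Function.extend_apply' _ _ _ hi]
  rw [Measure.map_apply hmeas (.univ_pi hs), hpre, Measure.pi_pi,
    ← Finset.prod_subset (Finset.subset_univ (Finset.univ.image f)) fun i _ hi => ?_,
    Finset.prod_image hf.injOn]
  · simp [hf.extend_apply]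
  · have hi : ¬ ∃ k, f k = i := by simpa using hi
    simp [Function.extend_apply' _ _ _ hi]

lemma measurePreserving_comp_triple {ι κ₁ κ₂ κ₃ α : Type*} [Fintype ι] [Fintype κ₁]
    [Fintype κ₂] [Fintype κ₃] [MeasurableSpace α] (μ : Measure α) [IsProbabilityMeasure μ]
    {c : κ₁ → ι} {a : κ₂ → ι} {b : κ₃ → ι}
    (hinj : Function.Injective (Sum.elim c (Sum.elim a b))) :
    MeasurePreserving (fun ω : ι → α => (ω ∘ c, ω ∘ a, ω ∘ b)) (Measure.pi fun _ => μ)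
      ((Measure.pi fun _ => μ).prod ((Measure.pi fun _ => μ).prod (Measure.pi fun _ => μ))) :=
  ((MeasurePreserving.id _).prod (measurePreserving_sumPiEquivProdPi fun _ => μ)).comp
    ((measurePreserving_sumPiEquivProdPi fun _ => μ).comp
      (measurePreserving_comp_of_injective μ hinj))

/-- `u ∈ chainSet n t` iff `t < u 0 < u 1 < ⋯ < u (n - 1) < 1`. -/
def chainSet : (n : ℕ) → ℝ → Set (Fin n → ℝ)
  | 0, t => {_u | t < 1}
  | n + 1, t => {u | t < u 0 ∧ Fin.tail u ∈ chainSet n (u 0)}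

def chainEnd {n : ℕ} (t : ℝ) (u : Fin n → ℝ) : ℝ :=
  (Fin.cons t u : Fin (n + 1) → ℝ) (Fin.last n)

@[simp]
lemma chainSet_zero (t : ℝ) (u : Fin 0 → ℝ) : u ∈ chainSet 0 t ↔ t < 1 := Iff.rfl

@[simp]
lemma cons_mem_chainSet {n : ℕ} {t y : ℝ} {v : Fin n → ℝ} :
    Fin.cons y v ∈ chainSet (n + 1) t ↔ t < y ∧ v ∈ chainSet n y := by
  simp [chainSet]

@[simp]
lemma chainEnd_cons {n : ℕ} (t y : ℝ) (v : Fin n → ℝ) :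
    chainEnd t (Fin.cons y v : Fin (n + 1) → ℝ) = chainEnd y v := by
  simp [chainEnd, ← Fin.succ_last]

lemma lt_one_of_mem_chainSet : ∀ {n : ℕ} {t : ℝ} {u : Fin n → ℝ}, u ∈ chainSet n t → t < 1
  | 0, _, _, h => h
  | _ + 1, _, _, h => h.1.trans (lt_one_of_mem_chainSet h.2)

lemma chainEnd_mem_Ico :
    ∀ {n : ℕ} {t : ℝ} {u : Fin n → ℝ}, u ∈ chainSet n t → chainEnd t u ∈ Ico t 1
  | 0, t, _, h => ⟨le_rfl, h⟩
  | _ + 1, t, u, h => by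
    rw [← Fin.cons_self_tail u, chainEnd_cons]
    exact Ico_subset_Ico_left h.1.le (chainEnd_mem_Ico h.2)

lemma measurableSet_mem_chainSet {α : Type*} [MeasurableSpace α] :
    ∀ {n : ℕ} {f : α → ℝ} {v : α → Fin n → ℝ}, Measurable f → Measurable v →
      MeasurableSet {a | v a ∈ chainSet n (f a)}
  | 0, _, _, hf, _ => measurableSet_lt hf measurable_const
  | _ + 1, _, _, hf, hv =>
    (measurableSet_lt hf ((measurable_pi_apply 0).comp hv)).inter
      (measurableSet_mem_chainSet ((measurable_pi_apply 0).comp hv)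
        (measurable_pi_iff.2 fun i => (measurable_pi_apply i.succ).comp hv))

lemma measurableSet_chainSet (n : ℕ) (t : ℝ) : MeasurableSet (chainSet n t) :=
  measurableSet_mem_chainSet measurable_const measurable_id

lemma measurable_chainEnd (n : ℕ) : Measurable fun p : ℝ × (Fin n → ℝ) => chainEnd p.1 p.2 := by
  cases n with
  | zero => exact measurable_fst
  | succ n => exact (measurable_pi_apply (Fin.last n)).comp measurable_snd

lemma mem_chainSet_iff_lt_succ (S : ℕ → ℝ) :
    ∀ (n a : ℕ), (fun i : Fin n => S (a + i + 1)) ∈ chainSet n (S a) ↔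
      (∀ k < n, S (a + k) < S (a + k + 1)) ∧ S (a + n) < 1
  | 0, a => by simp
  | n + 1, a => by
    have hcons : (fun i : Fin (n + 1) => S (a + i + 1)) =
        Fin.cons (S (a + 1)) fun i : Fin n => S (a + 1 + i + 1) := by
      ext i
      refine Fin.cases (by simp) (fun j => ?_) i
      simp only [Fin.cons_succ, Fin.val_succ]
      ring_nf
    rw [hcons, cons_mem_chainSet, mem_chainSet_iff_lt_succ S n (a + 1), Nat.forall_lt_succ_left]
    simp only [Nat.add_zero, show ∀ k, a + 1 + k = a + (k + 1) by omega]
    tauto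

lemma chainEnd_eq (S : ℕ → ℝ) (n a : ℕ) :
    chainEnd (S a) (fun i : Fin n => S (a + i + 1)) = S (a + n) := by
  cases n with
  | zero => rfl
  | succ n =>
    simp only [chainEnd, ← Fin.succ_last, Fin.cons_succ, Fin.val_last]
    ring_nf

lemma forall_lt_succ_iff_mem_chainSet (S : ℕ → ℝ) {q m : ℕ} (hS : S (q + m + 1) = 1) :
    (∀ k < q + m + 1, S k < S (k + 1)) ↔
      (fun i : Fin q => S (i + 1)) ∈ chainSet q (S 0) ∧
        (fun i : Fin m => S (q + i + 1)) ∈ chainSet m (S q) := by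
  have hfirst := mem_chainSet_iff_lt_succ S q 0
  simp only [zero_add] at hfirst
  have hsplit : (∀ k < q + m + 1, S k < S (k + 1)) ↔
      (∀ k < q, S k < S (k + 1)) ∧ ∀ k < m + 1, S (q + k) < S (q + k + 1) := by
    refine ⟨fun h => ⟨fun k hk => h k (by omega), fun k hk => h (q + k) (by omega)⟩,
      fun h k hk => ?_⟩
    by_cases hkq : k < q
    · exact h.1 k hkq
    · simpa [show q + (k - q) = k by omega] using h.2 (k - q) (by omega)
  have hlt : (fun i : Fin m => S (q + i + 1)) ∈ chainSet m (S q) → S q < 1 :=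
    lt_one_of_mem_chainSet
  rw [hsplit, Nat.forall_lt_succ_right, hS, ← mem_chainSet_iff_lt_succ, hfirst]
  tauto

lemma lintegral_Ioo_one_sub_pow {t : ℝ} (ht : t ≤ 1) (k : ℕ) :
    ∫⁻ y in Ioo t 1, ENNReal.ofReal ((1 - y) ^ k) =
      ENNReal.ofReal ((1 - t) ^ (k + 1) / (k + 1)) := by
  rw [← ofReal_integral_eq_lintegral_ofReal]
  · rw [← integral_Ioc_eq_integral_Ioo, ← intervalIntegral.integral_of_le ht,
      intervalIntegral.integral_comp_sub_left (fun y => y ^ k), integral_pow]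
    simp
  · exact (continuous_const.sub continuous_id).pow k |>.integrableOn_Icc.mono_set
      Ioo_subset_Icc_self
  · exact (ae_restrict_iff' measurableSet_Ioo).2 <| .of_forall fun y hy =>
      pow_nonneg (sub_nonneg.2 hy.2.le) k

lemma setLIntegral_unif_of_subset {s : Set ℝ} (hs : s ⊆ Icc 0 1) (f : ℝ → ENNReal) :
    ∫⁻ y in s, f y ∂unif = ∫⁻ y in s, f y := by
  rw [unif, Measure.restrict_restrict' measurableSet_Icc, inter_eq_self_of_subset_left hs]

/-- `chainSet 0 1` is empty, hence the side condition `t < 1 ∨ 0 < k + n`. -/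
theorem lintegral_chainSet (k : ℕ) : ∀ (n : ℕ) {t : ℝ}, 0 ≤ t → t ≤ 1 → (t < 1 ∨ 0 < k + n) →
    ∫⁻ u in chainSet n t, ENNReal.ofReal ((1 - chainEnd t u) ^ k) ∂(Measure.pi fun _ => unif) =
      ENNReal.ofReal ((1 - t) ^ (k + n) * k ! / (k + n)!)
  | 0, t, _, ht1, hkn => by
    rcases ht1.lt_or_eq with ht1 | rfl
    · have : chainSet 0 t = univ := eq_univ_of_forall fun _ => ht1
      simp [this, chainEnd, Nat.factorial_ne_zero]
    · have : chainSet 0 1 = ∅ := eq_empty_of_forall_notMem fun _ => lt_irrefl (1 : ℝ)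
      have hk : 0 < k := by simpa using hkn
      simp [this, zero_pow hk.ne']
  | n + 1, t, ht0, ht1, _ => by
    have hinner : ∀ y : ℝ, ∫⁻ v : Fin n → ℝ, (chainSet (n + 1) t).indicator
        (fun u => ENNReal.ofReal ((1 - chainEnd t u) ^ k)) (Fin.cons y v : Fin (n + 1) → ℝ)
          ∂(Measure.pi fun _ => unif) =
        (Ioo t 1).indicator (fun y => ENNReal.ofReal ((1 - y) ^ (k + n) * k ! / (k + n)!)) y := by
      intro y
      classical
      simp only [indicator_apply, cons_mem_chainSet, chainEnd_cons]
      by_cases hy : y ∈ Ioo t 1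
      · rw [if_pos hy, ← lintegral_chainSet k n (ht0.trans hy.1.le) hy.2.le (.inl hy.2),
          ← lintegral_indicator (measurableSet_chainSet n y)]
        simp [indicator, hy.1]
      · rw [if_neg hy]
        refine lintegral_eq_zero_of_ae_eq_zero (.of_forall fun v => ?_)
        have : ¬ (t < y ∧ v ∈ chainSet n y) := fun h => hy ⟨h.1, lt_one_of_mem_chainSet h.2⟩
        simp [this]
    have hF : Measurable ((chainSet (n + 1) t).indicator
        fun u => ENNReal.ofReal ((1 - chainEnd t u) ^ k)) :=
      (((measurable_const.sub ((measurable_chainEnd _).comp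
        (measurable_const.prodMk measurable_id))).pow_const k).ennreal_ofReal).indicator
        (measurableSet_chainSet _ _)
    have hconst : ∀ y : ℝ, ENNReal.ofReal ((1 - y) ^ (k + n) * k ! / (k + n)!) =
        ENNReal.ofReal ((1 - y) ^ (k + n)) * ENNReal.ofReal (k ! / (k + n)!) := fun y => by
      rw [mul_div_assoc, ENNReal.ofReal_mul' (by positivity)]
    have hlast := (measurePreserving_piFinSuccAbove (fun _ : Fin (n + 1) => unif) 0).symm
    rw [← lintegral_indicator (measurableSet_chainSet _ _),
      ← hlast.lintegral_comp_emb (MeasurableEquiv.measurableEmbedding _),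
      lintegral_prod _ (by exact (hF.comp hlast.measurable).aemeasurable)]
    simp only [MeasurableEquiv.piFinSuccAbove_symm_apply, Fin.insertNthEquiv, Equiv.coe_fn_mk,
      Fin.insertNth_zero', hinner]
    rw [lintegral_indicator measurableSet_Ioo,
      setLIntegral_unif_of_subset fun y hy => ⟨ht0.trans hy.1.le, hy.2.le⟩]
    simp_rw [hconst]
    rw [lintegral_mul_const' _ _ ENNReal.ofReal_ne_top, lintegral_Ioo_one_sub_pow ht1,
      ← ENNReal.ofReal_mul (by have := sub_nonneg.2 ht1; positivity)]
    congr 1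
    rw [← add_assoc, Nat.factorial_succ]
    push_cast
    field_simp

lemma measure_chainSet (n : ℕ) {t : ℝ} (ht0 : 0 ≤ t) (ht1 : t < 1) :
    (Measure.pi fun _ : Fin n => unif) (chainSet n t) = ENNReal.ofReal ((1 - t) ^ n / n !) := by
  simpa using lintegral_chainSet 0 n ht0 ht1.le (.inl ht1)

/-- The values along two root-to-leaf paths that share `q` random vertices and then split into
`m` random vertices each, for which both paths are open. -/
def forkSet (q m : ℕ) (x : ℝ) : Set ((Fin q → ℝ) × (Fin m → ℝ) × (Fin m → ℝ)) :=
  {p | p.1 ∈ chainSet q x ∧ p.2 ∈ chainSet m (chainEnd x p.1) ×ˢ chainSet m (chainEnd x p.1)}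

lemma measurableSet_forkSet (q m : ℕ) (x : ℝ) : MeasurableSet (forkSet q m x) := by
  have hend : Measurable fun p : (Fin q → ℝ) × (Fin m → ℝ) × (Fin m → ℝ) => chainEnd x p.1 :=
    (measurable_chainEnd q).comp (measurable_const.prodMk measurable_fst)
  exact (measurableSet_mem_chainSet measurable_const measurable_fst).inter
    ((measurableSet_mem_chainSet hend (measurable_fst.comp measurable_snd)).inter
      (measurableSet_mem_chainSet hend (measurable_snd.comp measurable_snd)))

def forkProb (x : ℝ) (q m : ℕ) : ℝ :=
  (1 - x) ^ (2 * m + q) * (2 * m)! / ((m ! : ℝ) ^ 2 * (2 * m + q)!)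

lemma forkProb_nonneg {x : ℝ} (hx : x ≤ 1) (q m : ℕ) : 0 ≤ forkProb x q m := by
  have := sub_nonneg.2 hx
  unfold forkProb
  positivity

theorem measure_forkSet {q m : ℕ} {x : ℝ} (hx0 : 0 ≤ x) (hx1 : x ≤ 1) (hqm : 0 < q + m) :
    ((Measure.pi fun _ : Fin q => unif).prod
        ((Measure.pi fun _ : Fin m => unif).prod (Measure.pi fun _ : Fin m => unif)))
        (forkSet q m x) = ENNReal.ofReal (forkProb x q m) := by
  have hslice : ∀ u : Fin q → ℝ,
      ((Measure.pi fun _ : Fin m => unif).prod (Measure.pi fun _ : Fin m => unif))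
        (Prod.mk u ⁻¹' forkSet q m x) = (chainSet q x).indicator
          (fun u => ENNReal.ofReal ((1 - chainEnd x u) ^ (2 * m)) *
            ENNReal.ofReal (1 / (m ! : ℝ) ^ 2)) u := by
    intro u
    by_cases hu : u ∈ chainSet q x
    · obtain ⟨hend0, hend1⟩ := chainEnd_mem_Ico hu
      have hpre : Prod.mk u ⁻¹' forkSet q m x =
          chainSet m (chainEnd x u) ×ˢ chainSet m (chainEnd x u) := by
        ext; simp [forkSet, hu]
      rw [indicator_of_mem hu, hpre, Measure.prod_prod,
        measure_chainSet m (hx0.trans hend0) hend1, ← ENNReal.ofReal_mul (by positivity),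
        ← ENNReal.ofReal_mul (pow_nonneg (by linarith) _)]
      congr 1
      ring
    · have hpre : Prod.mk u ⁻¹' forkSet q m x = ∅ := by
        ext; simp [forkSet, hu]
      rw [indicator_of_notMem hu, hpre, measure_empty]
  rw [Measure.prod_apply (measurableSet_forkSet q m x)]
  simp_rw [hslice]
  rw [lintegral_indicator (measurableSet_chainSet q x),
    lintegral_mul_const' _ _ ENNReal.ofReal_ne_top,
    lintegral_chainSet (2 * m) q hx0 hx1 (.inr (by omega)),
    ← ENNReal.ofReal_mul (by have := sub_nonneg.2 hx1; positivity)]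
  congr 1
  unfold forkProb
  field_simp

section Tree

variable {L : ℕ}

def treeNode (g : Equiv.Perm (Fin L)) (k : ℕ) (h : k < L) : TreeNode L :=
  ⟨⟨k, Nat.lt_succ_of_lt h⟩, fun i => g ⟨i, i.isLt.trans h⟩⟩

lemma level_eq_of_treeNode_eq {g g' : Equiv.Perm (Fin L)} {k k' : ℕ} {h : k < L} {h' : k' < L}
    (he : treeNode g k h = treeNode g' k' h') : k = k' :=
  congrArg (fun n : TreeNode L => (n.1 : ℕ)) he

lemma treeNode_eq_treeNode_iff {g g' : Equiv.Perm (Fin L)} {k : ℕ} {h h' : k < L} :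
    treeNode g k h = treeNode g' k h' ↔ ∀ i : Fin L, (i : ℕ) < k → g i = g' i := by
  simp only [treeNode, Sigma.mk.inj_iff, heq_eq_eq, true_and, funext_iff]
  exact ⟨fun he i hi => he ⟨i, hi⟩, fun he i => he _ i.isLt⟩

lemma treePathVal_zero {x : ℝ} {ω : TreeOmega L} {g : Equiv.Perm (Fin L)} (hL : 0 < L) :
    treePathVal L x ω g 0 = x := by
  simp [treePathVal, hL]

lemma treePathVal_of_pos {x : ℝ} {ω : TreeOmega L} {g : Equiv.Perm (Fin L)} {k : ℕ} (h : k < L)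
    (hk : 0 < k) : treePathVal L x ω g k = ω (treeNode g k h) := by
  simp [treePathVal, treeNode, h, hk.ne']

lemma treePathVal_of_le {x : ℝ} {ω : TreeOmega L} {g : Equiv.Perm (Fin L)} {k : ℕ} (h : L ≤ k) :
    treePathVal L x ω g k = 1 := by
  simp [treePathVal, h]

lemma measurableSet_treeOpenPath (x : ℝ) (g : Equiv.Perm (Fin L)) :
    MeasurableSet {ω : TreeOmega L | treeOpenPath L x ω g} := by
  have hval : ∀ k, Measurable fun ω : TreeOmega L => treePathVal L x ω g k := fun k => by
    unfold treePathVal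
    split_ifs
    exacts [measurable_const, measurable_pi_apply _, measurable_const]
  simp only [treeOpenPath, ofPred_forall]
  exact .iInter fun k => .iInter fun _ => measurableSet_lt (hval k) (hval (k + 1))

lemma treeOpenPath_iff {q m : ℕ} (hL : q + m + 1 = L) {x : ℝ} {ω : TreeOmega L}
    {g : Equiv.Perm (Fin L)} :
    treeOpenPath L x ω g ↔
      (fun i : Fin q => treePathVal L x ω g (i + 1)) ∈ chainSet q x ∧
        (fun i : Fin m => treePathVal L x ω g (q + i + 1)) ∈
          chainSet m (chainEnd x fun i : Fin q => treePathVal L x ω g (i + 1)) := by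
  have h0 := treePathVal_zero (x := x) (ω := ω) (g := g) (by omega : 0 < L)
  have hend := chainEnd_eq (fun k => treePathVal L x ω g k) q 0
  simp only [zero_add, h0] at hend
  have hsplit := forall_lt_succ_iff_mem_chainSet _
    (treePathVal_of_le (x := x) (ω := ω) (g := g) hL.ge)
  rw [h0] at hsplit
  rw [hend]
  subst hL
  exact hsplit

theorem measureReal_treeOpenPath_inter {q m : ℕ} (hL : q + m + 1 = L) (hqm : 0 < q + m)
    {x : ℝ} (hx : x ∈ Icc (0 : ℝ) 1) {g g' : Equiv.Perm (Fin L)}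
    (hagree : ∀ i : Fin L, (i : ℕ) < q → g i = g' i)
    (hsplit : 0 < m → ¬ ∀ i : Fin L, (i : ℕ) < q + 1 → g i = g' i) :
    (treeMeasure L).real {ω | treeOpenPath L x ω g ∧ treeOpenPath L x ω g'} = forkProb x q m := by
  let c : Fin q → TreeNode L := fun i => treeNode g (i + 1) (by omega)
  let a : Fin m → TreeNode L := fun i => treeNode g (q + i + 1) (by omega)
  let b : Fin m → TreeNode L := fun i => treeNode g' (q + i + 1) (by omega)
  have hc : ∀ i, c i = treeNode g' (i + 1) (by omega) := fun i =>
    treeNode_eq_treeNode_iff.2 fun j hj => hagree j (by omega)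
  have hab : ∀ i j, a i ≠ b j := fun i j he => by
    obtain rfl : i = j := Fin.ext (by have := level_eq_of_treeNode_eq he; omega)
    exact hsplit i.pos fun k hk => treeNode_eq_treeNode_iff.1 he k (by omega)
  have hinj : Function.Injective (Sum.elim c (Sum.elim a b)) := by
    refine .sumElim (fun i j he => Fin.ext (by have := level_eq_of_treeNode_eq he; omega))
      (.sumElim (fun i j he => Fin.ext (by have := level_eq_of_treeNode_eq he; omega))
        (fun i j he => Fin.ext (by have := level_eq_of_treeNode_eq he; omega)) hab) ?_
    rintro i (j | j) he <;> simp only [Sum.elim_inl, Sum.elim_inr] at he <;>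
      have := level_eq_of_treeNode_eq he <;> omega
  have hset : {ω | treeOpenPath L x ω g ∧ treeOpenPath L x ω g'} =
      (fun ω : TreeOmega L => (ω ∘ c, ω ∘ a, ω ∘ b)) ⁻¹' forkSet q m x := by
    ext ω
    have hu : ω ∘ c = fun i : Fin q => treePathVal L x ω g (i + 1) :=
      funext fun i => (treePathVal_of_pos _ (by omega)).symm
    have hu' : ω ∘ c = fun i : Fin q => treePathVal L x ω g' (i + 1) :=
      funext fun i => (hc i ▸ treePathVal_of_pos _ (by omega)).symm
    have hv : ω ∘ a = fun i : Fin m => treePathVal L x ω g (q + i + 1) :=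
      funext fun i => (treePathVal_of_pos _ (by omega)).symm
    have hw : ω ∘ b = fun i : Fin m => treePathVal L x ω g' (q + i + 1) :=
      funext fun i => (treePathVal_of_pos _ (by omega)).symm
    simp only [mem_ofPred_eq, mem_preimage, forkSet, mem_prod, treeOpenPath_iff hL, ← hu, ← hu',
      ← hv, ← hw]
    tauto
  rw [hset, measureReal_def, treeMeasure,
    (measurePreserving_comp_triple unif hinj).measure_preimage
      (measurableSet_forkSet q m x).nullMeasurableSet,
    measure_forkSet hx.1 hx.2 hqm, ENNReal.toReal_ofReal (forkProb_nonneg hx.2 q m)]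

end Tree

section SharedDepth

variable {n : ℕ}

/-- The root-to-leaf paths of `g` and `g'` share their vertices at levels
`1, …, sharedDepth g g'` (the leaves, at level `n`, never count). -/
def sharedDepth (g g' : Equiv.Perm (Fin n)) : ℕ :=
  Nat.findGreatest (fun k => ∀ i : Fin n, (i : ℕ) < k → g i = g' i) (n - 1)

lemma sharedDepth_le (g g' : Equiv.Perm (Fin n)) : sharedDepth g g' ≤ n - 1 :=
  Nat.findGreatest_le _

lemma sharedDepth_eq_iff {g g' : Equiv.Perm (Fin n)} {q : ℕ} (hq : q ≤ n - 1) :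
    sharedDepth g g' = q ↔ (∀ i : Fin n, (i : ℕ) < q → g i = g' i) ∧
      (q < n - 1 → ¬ ∀ i : Fin n, (i : ℕ) < q + 1 → g i = g' i) := by
  rw [sharedDepth, Nat.findGreatest_eq_iff]
  constructor
  · rintro ⟨-, hP, hgt⟩
    refine ⟨fun i hi => hP (by omega) i hi, fun hqn => hgt (by omega) (by omega)⟩
  · rintro ⟨hP, hnext⟩
    exact ⟨hq, fun _ => hP, fun k hk hkn hPk => hnext (by omega) fun i hi => hPk i (by omega)⟩

lemma card_perm_agree (g : Equiv.Perm (Fin n)) (k : ℕ) :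
    (Finset.univ.filter fun g' : Equiv.Perm (Fin n) =>
      ∀ i : Fin n, (i : ℕ) < k → g i = g' i).card = (n - k)! := by
  rw [← Fintype.card_subtype]
  have e : {g' : Equiv.Perm (Fin n) // ∀ i : Fin n, (i : ℕ) < k → g i = g' i} ≃
      Equiv.Perm {i : Fin n // k ≤ (i : ℕ)} :=
    ((Equiv.mulLeft g⁻¹).subtypeEquiv fun g' => by
      simp only [Equiv.coe_mulLeft, Equiv.Perm.mul_apply, Equiv.Perm.inv_eq_iff_eq, not_le]
      exact forall₂_congr fun _ _ => eq_comm).trans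
      (Equiv.Perm.subtypeEquivSubtypePerm _).symm
  rw [Fintype.card_congr e, Fintype.card_perm, Fintype.card_subtype]
  congr 1
  have := Finset.card_filter_add_card_filter_not (s := Finset.univ)
    (fun i : Fin n => (i : ℕ) < k)
  simp only [Fin.card_filter_val_lt, not_lt, Finset.card_univ, Fintype.card_fin] at this
  omega

lemma card_sharedDepth_eq (g : Equiv.Perm (Fin n)) {q : ℕ} (hq : q < n - 1) :
    (Finset.univ.filter fun g' => sharedDepth g g' = q).card = (n - q)! - (n - q - 1)! := by
  have hset : (Finset.univ.filter fun g' => sharedDepth g g' = q) =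
      (Finset.univ.filter fun g' : Equiv.Perm (Fin n) => ∀ i : Fin n, (i : ℕ) < q → g i = g' i) \
        (Finset.univ.filter fun g' : Equiv.Perm (Fin n) =>
          ∀ i : Fin n, (i : ℕ) < q + 1 → g i = g' i) := by
    ext g'
    simp [sharedDepth_eq_iff hq.le, hq]
  rw [hset, Finset.card_sdiff_of_subset, card_perm_agree, card_perm_agree, Nat.sub_add_eq]
  intro g' hg'
  simp only [Finset.mem_filter, Finset.mem_univ, true_and] at hg' ⊢
  exact fun i hi => hg' i (by omega)

lemma card_sharedDepth_eq_sub_one (g : Equiv.Perm (Fin n)) :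
    (Finset.univ.filter fun g' => sharedDepth g g' = n - 1).card = 1 := by
  have hset : (Finset.univ.filter fun g' => sharedDepth g g' = n - 1) =
      Finset.univ.filter fun g' : Equiv.Perm (Fin n) =>
        ∀ i : Fin n, (i : ℕ) < n - 1 → g i = g' i := by
    ext g'
    simp [sharedDepth_eq_iff le_rfl]
  rw [hset, card_perm_agree, Nat.factorial_eq_one]
  omega

lemma sum_sharedDepth (g : Equiv.Perm (Fin (n + 1))) (f : ℕ → ℝ) :
    ∑ g', f (sharedDepth g g') =
      ∑ q ∈ Finset.range n, (((n + 1 - q)! - (n - q)! : ℕ) : ℝ) * f q + f n := by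
  rw [← Finset.sum_fiberwise_of_maps_to (t := Finset.range (n + 1)) (g := sharedDepth g)
    fun g' _ => Finset.mem_range.2 (by have := sharedDepth_le g g'; omega)]
  have hfiber : ∀ q, ∑ g' ∈ Finset.univ.filter (fun g' => sharedDepth g g' = q),
      f (sharedDepth g g') = (Finset.univ.filter fun g' => sharedDepth g g' = q).card * f q :=
    fun q => by
      rw [Finset.sum_congr rfl fun g' hg' => by rw [(Finset.mem_filter.1 hg').2],
        Finset.sum_const, nsmul_eq_mul]
  simp only [hfiber]
  have hlast := card_sharedDepth_eq_sub_one g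
  rw [Nat.add_sub_cancel] at hlast
  rw [Finset.sum_range_succ, hlast, Nat.cast_one, one_mul]
  refine congrArg (· + _) (Finset.sum_congr rfl fun q hq => ?_)
  rw [card_sharedDepth_eq g (by simpa using hq), show n + 1 - q - 1 = n - q by omega]

end SharedDepth

lemma factorial_mul_forkProb_self (n : ℕ) (x : ℝ) :
    ((n + 1)! : ℝ) * forkProb x n 0 = ((n + 1 : ℕ) : ℝ) * (1 - x) ^ n := by
  simp only [forkProb, mul_zero, zero_add, Nat.factorial_zero, Nat.cast_one, one_pow, one_mul,
    Nat.factorial_succ, Nat.cast_mul]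
  field_simp

lemma factorial_mul_forkProb {n q : ℕ} (hq : q < n) (x : ℝ) :
    ((n + 1)! : ℝ) * ((((n + 1 - q)! - (n - q)! : ℕ) : ℝ) * forkProb x q (n - q)) =
      aCoef (n + 1) q * (1 - x) ^ (2 * (n + 1) - q - 2) := by
  obtain ⟨m, rfl⟩ : ∃ m, n = q + m + 1 := ⟨n - q - 1, by omega⟩
  rw [show q + m + 1 + 1 - q = m + 1 + 1 by omega, show q + m + 1 - q = m + 1 by omega,
    Nat.factorial_succ (m + 1), ← Nat.pred_mul, Nat.pred_succ]
  simp only [forkProb, aCoef, show 2 * (q + m + 1 + 1) - 2 * q - 2 = 2 * (m + 1) by omega,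
    show q + m + 1 + 1 - q - 2 = m by omega,
    show 2 * (q + m + 1 + 1) - q - 2 = 2 * (m + 1) + q by omega,
    Nat.cast_mul, Nat.factorial_succ m]
  push_cast
  field_simp

/-- exact second moment of `Θ` on the tree. -/
theorem tree_second_moment (L : ℕ) (hL : 2 ≤ L) (x : ℝ) (hx : x ∈ Set.Icc (0:ℝ) 1) :
    (∫ ω, ((treeTheta L x ω : ℝ)) ^ 2 ∂ treeMeasure L) =
      (∑ q ∈ Finset.range (L - 1), aCoef L q * (1 - x) ^ (2 * L - q - 2)) +
        (L : ℝ) * (1 - x) ^ (L - 1) := by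
  obtain ⟨n, rfl⟩ : ∃ n, L = n + 1 := ⟨L - 1, by omega⟩
  have hpair : ∀ g g' : Equiv.Perm (Fin (n + 1)),
      (treeMeasure (n + 1)).real ({ω | treeOpenPath (n + 1) x ω g} ∩
        {ω | treeOpenPath (n + 1) x ω g'}) = forkProb x (sharedDepth g g') (n - sharedDepth g g') :=
    fun g g' => by
      have hle := sharedDepth_le g g'
      have hd := (sharedDepth_eq_iff hle).1 rfl
      exact measureReal_treeOpenPath_inter (by omega) (by omega) hx hd.1
        fun hm => hd.2 (by omega)
  calc _ = ∑ g : Equiv.Perm (Fin (n + 1)), ∑ g', (treeMeasure (n + 1)).real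
        ({ω | treeOpenPath (n + 1) x ω g} ∩ {ω | treeOpenPath (n + 1) x ω g'}) :=
        integral_card_sq (measurableSet_treeOpenPath x)
    _ = ∑ _g : Equiv.Perm (Fin (n + 1)), (∑ q ∈ Finset.range n,
          (((n + 1 - q)! - (n - q)! : ℕ) : ℝ) * forkProb x q (n - q) + forkProb x n 0) := by
        simp only [hpair, sum_sharedDepth _ fun q => forkProb x q (n - q), Nat.sub_self]
    _ = _ := by
        rw [Finset.sum_const, Finset.card_univ, Fintype.card_perm, Fintype.card_fin, nsmul_eq_mul,
          mul_add, Finset.mul_sum, factorial_mul_forkProb_self, Nat.add_sub_cancel]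
        congr 1
        exact Finset.sum_congr rfl fun q hq => factorial_mul_forkProb (Finset.mem_range.1 hq) x

end
end

section
/- Set q₀(L) = ⌈ ln(L²)/ln 2 + 1 ⌉. There exists an integer L₀ such that for every L ≥ L₀: (i) a(L,q) ≤ L²·(1.99)^{−q} for every integer q with 0 ≤ q ≤ q₀(L); and (ii) a(L,q) ≤ 2 for every integer q with q₀(L) ≤ q ≤ L−2. -/
open MeasureTheory Real Filter Topology ProbabilityTheory

noncomputable section

/-!
Write `n = L - q - 2`. Passing from `q` to `q + 1` multiplies `a(L,q)` by
`r_L(n) = n (L + n) / ((2n + 1)(2n + 2))`, and `a(L,0) = L (L - 1)`.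

While `q ≤ q₀`, `n` is so close to `L` that `r_L(n) ≤ (q₀ + 1) / (2 q₀) < 1 / 1.99`, which
gives (i); at `q = q₀` this yields `a(L,q₀) ≤ L² e / 2^{q₀} ≤ e / 2 < 2`, because `q₀` was
chosen with `2 L² ≤ 2^{q₀}`. Beyond `q₀`, once `r_L(n) > 1` it stays so as `n` decreases, so
`a(L,·)` first decreases and then increases on `[q₀, L - 2]`, and is bounded by the larger of
its values `a(L,q₀) < 2` and `a(L,L-2) = 2` at the endpoints. "For `L` large" is needed only
for `q₀ ≥ 199` and `(q₀ + 2)² ≤ 2L`, which hold eventually since `q₀ = O(log L)`.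
-/

open scoped Nat

lemma le_max_of_lt_add_one_imp_lt {α : Type*} [LinearOrder α] {f : ℕ → α} {a b : ℕ}
    (hf : ∀ i, a ≤ i → i + 2 ≤ b → f i < f (i + 1) → f (i + 1) < f (i + 2))
    {i : ℕ} (hai : a ≤ i) (hib : i ≤ b) : f i ≤ max (f a) (f b) := by
  induction i, hai using Nat.le_induction with
  | base => exact le_max_left _ _
  | succ i hai ih =>
    by_cases hlt : f i < f (i + 1)
    · have hinc : ∀ j, i ≤ j → j + 1 ≤ b → f j < f (j + 1) := by
        intro j hij hjb
        induction j, hij using Nat.le_induction with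
        | base => exact hlt
        | succ j hij ihj => exact hf j (hai.trans hij) hjb (ihj (by omega))
      have hmono : MonotoneOn f (Set.Icc i b) :=
        monotoneOn_of_le_add_one Set.ordConnected_Icc fun j _ hj hj1 => (hinc j hj.1 hj1.2).le
      exact (hmono ⟨by omega, hib⟩ ⟨by omega, le_rfl⟩ hib).trans (le_max_right _ _)
    · exact (not_lt.1 hlt).trans (ih (by omega))

lemma aCoef_pos (L q : ℕ) : 0 < aCoef L q := by
  unfold aCoef
  positivity

lemma aCoef_add_two (q n : ℕ) :
    aCoef (q + n + 2) q = (q + n + 2)! * (2 * n + 2)! / (n ! * (q + 2 * n + 2)! : ℝ) := by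
  unfold aCoef
  rw [show 2 * (q + n + 2) - 2 * q - 2 = 2 * n + 2 by omega, show q + n + 2 - q - 2 = n by omega,
    show 2 * (q + n + 2) - q - 2 = q + 2 * n + 2 by omega]

lemma aCoef_zero (n : ℕ) : aCoef (n + 2) 0 = (n + 2) * (n + 1) := by
  rw [← zero_add n, aCoef_add_two, zero_add, zero_add, Nat.factorial_succ, Nat.factorial_succ]
  push_cast
  field_simp
  ring

lemma aCoef_self_sub_two (q : ℕ) : aCoef (q + 2) q = 2 := by
  have h := aCoef_add_two q 0
  simp only [add_zero, mul_zero, zero_add, Nat.factorial_two, Nat.factorial_zero] at h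
  rw [h]
  field_simp
  norm_num

def aCoefRatio (L n : ℕ) : ℝ := n * (L + n) / ((2 * n + 1) * (2 * n + 2))

lemma aCoef_succ {L q : ℕ} (h : q + 3 ≤ L) :
    aCoef L (q + 1) = aCoef L q * aCoefRatio L (L - q - 2) := by
  obtain ⟨n, rfl⟩ : ∃ n, L = q + n + 3 := ⟨L - q - 3, by omega⟩
  have h₁ := aCoef_add_two (q + 1) n
  have h₂ := aCoef_add_two q (n + 1)
  rw [show q + 1 + n + 2 = q + n + 3 by omega] at h₁
  rw [show q + (n + 1) + 2 = q + n + 3 by omega] at h₂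
  rw [h₁, h₂, show q + n + 3 - q - 2 = n + 1 by omega, aCoefRatio,
    show 2 * (n + 1) + 2 = (2 * n + 2) + 1 + 1 by omega,
    show q + 2 * (n + 1) + 2 = (q + 1 + 2 * n + 2) + 1 by omega,
    Nat.factorial_succ (2 * n + 2 + 1), Nat.factorial_succ (2 * n + 2),
    Nat.factorial_succ (q + 1 + 2 * n + 2), Nat.factorial_succ n]
  push_cast
  field_simp
  ring

lemma aCoefRatio_le {L n Q : ℕ} (hQ : 0 < Q) (h : (L : ℝ) * Q ≤ n * (Q + 2)) :
    aCoefRatio L n ≤ (Q + 1) / (2 * Q) := by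
  rw [aCoefRatio, div_le_div_iff₀ (by positivity) (by positivity)]
  nlinarith [mul_le_mul_of_nonneg_left h (Nat.cast_nonneg n : (0 : ℝ) ≤ n)]

lemma one_lt_aCoefRatio_of_succ {L n : ℕ} (hn : 1 ≤ n) (h : 1 < aCoefRatio L (n + 1)) :
    1 < aCoefRatio L n := by
  rw [aCoefRatio, one_lt_div (by positivity)] at h ⊢
  have hn' : (1 : ℝ) ≤ n := by exact_mod_cast hn
  push_cast at h
  nlinarith [mul_lt_mul_of_pos_left h (by linarith : (0 : ℝ) < n)]

lemma aCoef_le_geometric {L Q : ℕ} (hQ : 0 < Q) (hL : (Q + 2) ^ 2 ≤ 2 * L) {q : ℕ}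
    (hq : q ≤ Q) : aCoef L q ≤ L ^ 2 * ((Q + 1) / (2 * Q)) ^ q := by
  induction q with
  | zero =>
    have hL2 : 2 ≤ L := by nlinarith
    obtain ⟨n, rfl⟩ : ∃ n, L = n + 2 := ⟨L - 2, by omega⟩
    rw [aCoef_zero]
    push_cast
    nlinarith
  | succ q ih =>
    have hLq : q + 3 ≤ L := by nlinarith
    have hratio : aCoefRatio L (L - q - 2) ≤ (Q + 1) / (2 * Q) := by
      refine aCoefRatio_le hQ ?_
      rw [Nat.cast_sub (by omega), Nat.cast_sub (by omega)]
      have hL' : ((Q : ℝ) + 2) ^ 2 ≤ 2 * L := by exact_mod_cast hL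
      have hq' : (q : ℝ) + 1 ≤ Q := by exact_mod_cast hq
      push_cast
      nlinarith
    calc aCoef L (q + 1) = aCoef L q * aCoefRatio L (L - q - 2) := aCoef_succ hLq
      _ ≤ (L ^ 2 * ((Q + 1) / (2 * Q)) ^ q) * ((Q + 1) / (2 * Q)) :=
        mul_le_mul (ih (by omega)) hratio (by unfold aCoefRatio; positivity) (by positivity)
      _ = L ^ 2 * ((Q + 1) / (2 * Q)) ^ (q + 1) := by ring

lemma aCoef_le_max {L Q q : ℕ} (hQq : Q ≤ q) (hqL : q ≤ L - 2) :
    aCoef L q ≤ max (aCoef L Q) 2 := by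
  obtain hL | hL := Nat.lt_or_ge L 2
  · obtain rfl : q = Q := by omega
    exact le_max_left _ _
  rw [← aCoef_self_sub_two (L - 2), Nat.sub_add_cancel hL]
  refine le_max_of_lt_add_one_imp_lt (fun i _ hi hlt => ?_) hQq hqL
  have e₁ : aCoef L (i + 1) = aCoef L i * aCoefRatio L (L - i - 2) := aCoef_succ (by omega)
  have e₂ : aCoef L (i + 2) = aCoef L (i + 1) * aCoefRatio L (L - (i + 1) - 2) :=
    aCoef_succ (by omega)
  rw [e₁] at hlt
  have h₁ : 1 < aCoefRatio L (L - i - 2) := (lt_mul_iff_one_lt_right (aCoef_pos L i)).1 hlt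
  have h₂ : 1 < aCoefRatio L (L - (i + 1) - 2) :=
    one_lt_aCoefRatio_of_succ (by omega) (by rwa [show L - (i + 1) - 2 + 1 = L - i - 2 by omega])
  rw [e₂]
  exact lt_mul_of_one_lt_right (aCoef_pos L (i + 1)) h₂

lemma succ_div_two_mul_pow_le {Q : ℕ} (hQ : 0 < Q) :
    (((Q : ℝ) + 1) / (2 * Q)) ^ Q ≤ exp 1 / 2 ^ Q := by
  rw [show ((Q : ℝ) + 1) / (2 * Q) = (1 + (Q : ℝ)⁻¹) / 2 by field_simp, div_pow]
  gcongr
  exact one_add_inv_pow_le_exp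

lemma two_mul_sq_le_two_pow_q0 {L : ℕ} (hL : 0 < L) : 2 * (L : ℝ) ^ 2 ≤ 2 ^ q0 L := by
  have hceil : log ((L : ℝ) ^ 2) / log 2 + 1 ≤ q0 L := Nat.le_ceil _
  rw [div_add_one (log_pos one_lt_two).ne', div_le_iff₀ (log_pos one_lt_two)] at hceil
  calc 2 * (L : ℝ) ^ 2 = exp (log ((L : ℝ) ^ 2) + log 2) := by
        rw [exp_add, exp_log (by positivity), exp_log two_pos, mul_comm]
    _ ≤ exp (log 2 * q0 L) := exp_le_exp.2 (by rw [mul_comm]; exact hceil)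
    _ = 2 ^ q0 L := by rw [← rpow_def_of_pos two_pos, rpow_natCast]

lemma q0_lt (L : ℕ) : (q0 L : ℝ) < 2 * log L / log 2 + 2 := by
  have hlog : 0 ≤ 2 * log L / log 2 := by
    have := log_natCast_nonneg L
    have := log_pos one_lt_two
    positivity
  have := Nat.ceil_lt_add_one (by linarith : 0 ≤ 2 * log L / log 2 + 1)
  rw [q0, log_pow]
  push_cast
  linarith

lemma tendsto_q0 : Tendsto q0 atTop atTop := by
  rw [← tendsto_natCast_atTop_iff (R := ℝ)]
  refine tendsto_atTop_mono (fun L => Nat.le_ceil _) (tendsto_atTop_add_const_right _ _ ?_)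
  refine Tendsto.atTop_div_const (log_pos one_lt_two) ?_
  exact tendsto_log_atTop.comp ((tendsto_pow_atTop two_ne_zero).comp tendsto_natCast_atTop_atTop)

lemma eventually_q0_add_two_sq_le : ∀ᶠ L : ℕ in atTop, (q0 L + 2) ^ 2 ≤ 2 * L := by
  have hlog : ∀ᶠ x : ℝ in atTop, 4 ≤ log x ∧ 16 * log x ^ 2 ≤ 2 * x := by
    refine (tendsto_log_atTop.eventually_ge_atTop 4).and ?_
    filter_upwards [(isLittleO_pow_log_id_atTop (n := 2)).bound (by norm_num : (0 : ℝ) < 1 / 8),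
      eventually_ge_atTop 0] with x hx hx0
    rw [Real.norm_eq_abs, Real.norm_eq_abs, abs_of_nonneg (by positivity), id,
      abs_of_nonneg hx0] at hx
    linarith
  filter_upwards [tendsto_natCast_atTop_atTop.eventually hlog] with L ⟨h4, h16⟩
  have hlog2 : 2 / 3 < log 2 := by linarith [log_two_gt_d9]
  have hdiv : 2 * log L / log 2 ≤ 3 * log L := by
    rw [div_le_iff₀ (by linarith)]
    nlinarith
  have hQ : (q0 L : ℝ) + 2 ≤ 4 * log L := by linarith [q0_lt L]
  have : ((q0 L : ℝ) + 2) ^ 2 ≤ 2 * L := by nlinarith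
  exact_mod_cast this

/-- for `L` large enough, `a(L,q) ≤ L²·1.99^{−q}` for `q ≤ q₀(L)` and
`a(L,q) ≤ 2` for `q₀(L) ≤ q ≤ L−2`. -/
theorem aCoef_bounds :
    ∃ L0 : ℕ, ∀ L : ℕ, L0 ≤ L →
      (∀ q : ℕ, q ≤ q0 L → aCoef L q ≤ (L : ℝ) ^ 2 * (1.99 : ℝ) ^ (-(q : ℤ))) ∧
      (∀ q : ℕ, q0 L ≤ q → q ≤ L - 2 → aCoef L q ≤ 2) := by
  obtain ⟨L0, hL0⟩ := ((tendsto_q0.eventually_ge_atTop 199).and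
    (eventually_q0_add_two_sq_le.and (eventually_gt_atTop 0))).exists_forall_of_atTop
  refine ⟨L0, fun L hL => ?_⟩
  obtain ⟨hQ, hQL, hL⟩ := hL0 L hL
  have hQ' : (199 : ℝ) ≤ q0 L := by exact_mod_cast hQ
  have hratio : ((q0 L : ℝ) + 1) / (2 * q0 L) ≤ 1 / 1.99 := by
    rw [div_le_div_iff₀ (by positivity) (by norm_num)]
    linarith
  have hgeom {q : ℕ} (hq : q ≤ q0 L) := aCoef_le_geometric (by omega) hQL hq
  refine ⟨fun q hq => ?_, fun q hQq hqL => (aCoef_le_max hQq hqL).trans (max_le ?_ le_rfl)⟩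
  · calc aCoef L q ≤ L ^ 2 * (((q0 L : ℝ) + 1) / (2 * q0 L)) ^ q := hgeom hq
      _ ≤ L ^ 2 * (1 / 1.99) ^ q := by gcongr
      _ = L ^ 2 * 1.99 ^ (-(q : ℤ)) := by rw [zpow_neg, zpow_natCast, one_div, inv_pow]
  · have hL2 := two_mul_sq_le_two_pow_q0 hL
    calc aCoef L (q0 L) ≤ L ^ 2 * (((q0 L : ℝ) + 1) / (2 * q0 L)) ^ q0 L := hgeom le_rfl
      _ ≤ L ^ 2 * (exp 1 / 2 ^ q0 L) := by gcongr; exact succ_div_two_mul_pow_le (by omega)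
      _ ≤ exp 1 / 2 := by
        rw [mul_div_assoc', div_le_div_iff₀ (by positivity) two_pos]
        nlinarith [exp_pos 1]
      _ ≤ 2 := by linarith [exp_one_lt_three]
end
end

section
/- There exists a constant M > 0 such that for every integer k ≥ 0 and every z > −1 one has 0 ≤ 1/(1+z) − F_k(z) ≤ M · z² / ( 2^k · (1+z)³ ). In particular F_k(z) ≤ 1/(1+z) for all z > −1 and all k ≥ 0. -/
open MeasureTheory Real Filter Topology ProbabilityTheory

noncomputable section

/-! With `G_k(z) = 1/(1+z) - F_k(z)` the recursion reads
`F_{k+1}(z) = (1+z)⁻¹ exp(-∫_0^z G_k(t)/t dt)`. Since `G_k(t)/t` has the sign of `t`, the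
integral `I` is nonnegative, and a bound `G_k(t) ≤ C t²/(1+t)³` gives `I ≤ C z²/(2(1+z)²)`;
with `0 ≤ 1 - e^{-I} ≤ I` the constant halves at each step. The base case amounts to
`(1+z)³ e^{-z} ≥ 1 + 2z - z²`. -/

open Set intervalIntegral

theorem exp_neg_le_one_div_one_add {z : ℝ} (hz : -1 < z) : exp (-z) ≤ 1 / (1 + z) := by
  rw [exp_neg, one_div]
  exact inv_anti₀ (by linarith) (by linarith [add_one_le_exp z])

theorem one_div_one_add_sub_exp_neg_le {z : ℝ} (hz : -1 < z) :
    1 / (1 + z) - exp (-z) ≤ 2 * z ^ 2 / (1 + z) ^ 3 := by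
  have h1z : 0 < 1 + z := by linarith
  suffices key : 1 + 2 * z - z ^ 2 ≤ (1 + z) ^ 3 * exp (-z) by
    rw [sub_le_iff_le_add, div_add' _ _ _ (by positivity), div_le_div_iff₀ h1z (by positivity)]
    nlinarith
  rcases le_or_gt z 3 with hz3 | hz3
  · -- `(1+z)^3 (1-z/3)^3 - (1 + 2z - z^2) = (2z - z^2)^2 (9 + 2z - z^2) / 27`
    have hexp : (1 - z / 3) ^ 3 ≤ exp (-z) := by
      simpa using one_sub_div_pow_le_exp_neg (n := 3) (t := z) (by norm_num; linarith)
    nlinarith [mul_le_mul_of_nonneg_left hexp (pow_pos h1z 3).le,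
      mul_nonneg (sq_nonneg (2 * z - z ^ 2)) (by nlinarith : 0 ≤ 9 + 2 * z - z ^ 2)]
  · nlinarith [mul_pos (pow_pos h1z 3) (exp_pos (-z))]

theorem ContinuousOn.intervalIntegrable_of_ordConnected {g : ℝ → ℝ} {s : Set ℝ} [s.OrdConnected]
    (hg : ContinuousOn g s) {a b : ℝ} (ha : a ∈ s) (hb : b ∈ s) :
    IntervalIntegrable g volume a b :=
  (hg.mono (OrdConnected.uIcc_subset ‹_› ha hb)).intervalIntegrable

theorem ContinuousOn.continuousOn_primitive_of_isOpen {g : ℝ → ℝ} {s : Set ℝ} [s.OrdConnected]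
    (hs : IsOpen s) (hg : ContinuousOn g s) {a : ℝ} (ha : a ∈ s) :
    ContinuousOn (fun z => ∫ t in a..z, g t) s := fun z hz =>
  (integral_hasDerivAt_right (hg.intervalIntegrable_of_ordConnected ha hz)
    (hg.stronglyMeasurableAtFilter hs z hz) (hg.continuousAt (hs.mem_nhds hz))).continuousAt
    |>.continuousWithinAt

theorem continuousAt_div_self_zero_of_abs_le {f b : ℝ → ℝ} (hb : ContinuousAt b 0)
    (hf : ∀ᶠ t in 𝓝 0, |f t| ≤ b t * t ^ 2) : ContinuousAt (fun t => f t / t) 0 := by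
  have hbound : ∀ᶠ t in 𝓝 0, ‖f t / t‖ ≤ b t * |t| := hf.mono fun t ht => by
    rcases eq_or_ne t 0 with rfl | ht0
    · simp
    · rwa [Real.norm_eq_abs, abs_div, div_le_iff₀ (abs_pos.2 ht0), mul_assoc, ← sq, sq_abs]
  have hlim : Tendsto (fun t => b t * |t|) (𝓝 0) (𝓝 0) := by
    simpa using hb.tendsto.mul (continuous_abs.tendsto 0)
  simpa [ContinuousAt] using squeeze_zero_norm' hbound hlim

theorem uIcc_zero_subset_Ioi_neg_one {z : ℝ} (hz : -1 < z) : uIcc 0 z ⊆ Ioi (-1) :=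
  ordConnected_Ioi.uIcc_subset (by norm_num) hz

theorem integral_div_self_nonneg {g : ℝ → ℝ} {z : ℝ} (hg : ∀ t ∈ uIcc 0 z, 0 ≤ g t) :
    0 ≤ ∫ t in (0 : ℝ)..z, g t / t := by
  rcases le_total 0 z with hz | hz
  · exact integral_nonneg hz fun t ht => div_nonneg (hg t (Icc_subset_uIcc ht)) ht.1
  · rw [integral_symm, ← intervalIntegral.integral_neg]
    exact integral_nonneg hz fun t ht =>
      neg_nonneg.2 (div_nonpos_of_nonneg_of_nonpos (hg t (Icc_subset_uIcc' ht)) ht.2)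

theorem integral_div_self_le {g h : ℝ → ℝ} {z : ℝ} (hgh : ∀ t ∈ uIcc 0 z, g t ≤ h t)
    (hg : IntervalIntegrable (fun t => g t / t) volume 0 z)
    (hh : IntervalIntegrable (fun t => h t / t) volume 0 z) :
    ∫ t in (0 : ℝ)..z, g t / t ≤ ∫ t in (0 : ℝ)..z, h t / t := by
  have := integral_div_self_nonneg fun t ht => sub_nonneg.2 (hgh t ht)
  simp only [sub_div] at this
  rwa [integral_sub hh hg, sub_nonneg] at this

theorem continuousOn_one_div_one_add : ContinuousOn (fun t : ℝ => 1 / (1 + t)) (Ioi (-1)) :=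
  continuousOn_const.div (by fun_prop) fun t ht => by linarith [mem_Ioi.1 ht]

theorem integral_one_div_one_add {z : ℝ} (hz : -1 < z) :
    ∫ t in (0 : ℝ)..z, 1 / (1 + t) = log (1 + z) := by
  simp only [one_div]
  rw [integral_comp_add_left (fun x => x⁻¹), integral_inv_of_pos (by norm_num) (by linarith)]
  simp

theorem integral_div_one_add_pow_three {z : ℝ} (hz : -1 < z) :
    ∫ t in (0 : ℝ)..z, t / (1 + t) ^ 3 = z ^ 2 / (2 * (1 + z) ^ 2) := by
  have hpos : ∀ t ∈ uIcc 0 z, 0 < 1 + t := fun t ht => by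
    linarith [mem_Ioi.1 (uIcc_zero_subset_Ioi_neg_one hz ht)]
  have hderiv : ∀ t ∈ uIcc 0 z,
      HasDerivAt (fun u => u ^ 2 / (2 * (1 + u) ^ 2)) (t / (1 + t) ^ 3) t := fun t ht => by
    have h1t := (hpos t ht).ne'
    have := (hasDerivAt_pow 2 t).fun_div ((((hasDerivAt_id' t).const_add 1).fun_pow 2).const_mul 2)
      (mul_ne_zero two_ne_zero (pow_ne_zero 2 h1t))
    refine this.congr_deriv ?_
    field_simp
    ring
  rw [integral_eq_sub_of_hasDerivAt hderiv
    ((continuousOn_id.div (by fun_prop) fun t ht => (pow_pos (hpos t ht) 3).ne').intervalIntegrable)]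
  simp

def fseqStep (F : ℝ → ℝ) (z : ℝ) : ℝ := exp (-(∫ t in (0 : ℝ)..z, (1 - F t) / t))

structure LowerApproxInvOneAdd (C : ℝ) (F : ℝ → ℝ) : Prop where
  continuousOn : ContinuousOn F (Ioi (-1))
  sub_nonneg : ∀ z, -1 < z → 0 ≤ 1 / (1 + z) - F z
  sub_le : ∀ z, -1 < z → 1 / (1 + z) - F z ≤ C * z ^ 2 / (1 + z) ^ 3

theorem lowerApproxInvOneAdd_exp_neg : LowerApproxInvOneAdd 2 (fun z => exp (-z)) where
  continuousOn := by fun_prop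
  sub_nonneg _ hz := sub_nonneg.2 (exp_neg_le_one_div_one_add hz)
  sub_le _ hz := by simpa only [mul_div_assoc] using one_div_one_add_sub_exp_neg_le hz

namespace LowerApproxInvOneAdd

variable {C : ℝ} {F : ℝ → ℝ} (hF : LowerApproxInvOneAdd C F)
include hF

theorem continuousOn_sub_div :
    ContinuousOn (fun t => (1 / (1 + t) - F t) / t) (Ioi (-1)) := by
  intro t ht
  have h1t : 1 + t ≠ 0 := by linarith [mem_Ioi.1 ht]
  rcases eq_or_ne t 0 with rfl | ht0
  · refine (continuousAt_div_self_zero_of_abs_le (b := fun t => C / (1 + t) ^ 3)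
      (continuousAt_const.div (by fun_prop) (by norm_num)) ?_).continuousWithinAt
    filter_upwards [Ioi_mem_nhds (show (-1 : ℝ) < 0 by norm_num)] with t ht
    rw [abs_of_nonneg (hF.sub_nonneg t ht), div_mul_eq_mul_div]
    exact hF.sub_le t ht
  · exact (((continuousAt_const.div (continuousAt_const.add continuousAt_id) h1t).sub
      (hF.continuousOn.continuousAt (Ioi_mem_nhds ht))).div continuousAt_id ht0).continuousWithinAt

theorem fseqStep_eq {z : ℝ} (hz : -1 < z) :
    fseqStep F z = 1 / (1 + z) * exp (-(∫ t in (0 : ℝ)..z, (1 / (1 + t) - F t) / t)) := by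
  have hsplit : ∫ t in (0 : ℝ)..z, (1 - F t) / t
      = ∫ t in (0 : ℝ)..z, (1 / (1 + t) + (1 / (1 + t) - F t) / t) := by
    refine integral_congr_ae ((Measure.ae_ne volume 0).mono fun t ht0 ht => ?_)
    have h1t : 1 + t ≠ 0 := by
      linarith [mem_Ioi.1 (uIcc_zero_subset_Ioi_neg_one hz (uIoc_subset_uIcc ht))]
    field_simp
    ring
  have hzI : z ∈ Ioi (-1) := hz
  have h0I : (0 : ℝ) ∈ Ioi (-1) := by norm_num
  rw [fseqStep, hsplit,
    integral_add (continuousOn_one_div_one_add.intervalIntegrable_of_ordConnected h0I hzI)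
    (hF.continuousOn_sub_div.intervalIntegrable_of_ordConnected h0I hzI),
    integral_one_div_one_add hz, neg_add, exp_add, exp_neg, exp_log (by linarith), one_div]

theorem integral_sub_div_nonneg {z : ℝ} (hz : -1 < z) :
    0 ≤ ∫ t in (0 : ℝ)..z, (1 / (1 + t) - F t) / t :=
  integral_div_self_nonneg fun t ht => hF.sub_nonneg t (uIcc_zero_subset_Ioi_neg_one hz ht)

theorem integral_sub_div_le {z : ℝ} (hz : -1 < z) :
    ∫ t in (0 : ℝ)..z, (1 / (1 + t) - F t) / t ≤ C * z ^ 2 / (2 * (1 + z) ^ 2) := by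
  have hzI : z ∈ Ioi (-1) := hz
  have h0I : (0 : ℝ) ∈ Ioi (-1) := by norm_num
  have hmajorant : (fun t : ℝ => C * t ^ 2 / (1 + t) ^ 3 / t) = fun t => C * (t / (1 + t) ^ 3) :=
    funext fun t => by
      rcases eq_or_ne t 0 with rfl | ht0
      · simp
      · field_simp
  have hcont : ContinuousOn (fun t : ℝ => C * (t / (1 + t) ^ 3)) (Ioi (-1)) :=
    continuousOn_const.mul (continuousOn_id.div (by fun_prop) fun t ht =>
      pow_ne_zero 3 (by linarith [mem_Ioi.1 ht]))
  have hle := integral_div_self_le (h := fun t => C * t ^ 2 / (1 + t) ^ 3)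
    (fun t ht => hF.sub_le t (uIcc_zero_subset_Ioi_neg_one hz ht))
    (hF.continuousOn_sub_div.intervalIntegrable_of_ordConnected h0I hzI)
    (by rw [hmajorant]; exact hcont.intervalIntegrable_of_ordConnected h0I hzI)
  rwa [hmajorant, intervalIntegral.integral_const_mul, integral_div_one_add_pow_three hz,
    ← mul_div_assoc] at hle

theorem fseqStep : LowerApproxInvOneAdd (C / 2) (fseqStep F) where
  continuousOn := by
    have hprim := hF.continuousOn_sub_div.continuousOn_primitive_of_isOpen isOpen_Ioi
      (show (0 : ℝ) ∈ Ioi (-1) by norm_num)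
    exact (continuousOn_one_div_one_add.mul hprim.neg.rexp).congr fun z hz => hF.fseqStep_eq hz
  sub_nonneg z hz := by
    rw [hF.fseqStep_eq hz, _root_.sub_nonneg]
    exact mul_le_of_le_one_right (one_div_pos.2 (by linarith)).le
      (exp_le_one_iff.2 (neg_nonpos.2 (hF.integral_sub_div_nonneg hz)))
  sub_le z hz := by
    set I := ∫ t in (0 : ℝ)..z, (1 / (1 + t) - F t) / t
    have h1z : 0 < 1 + z := by linarith
    rw [hF.fseqStep_eq hz]
    calc 1 / (1 + z) - 1 / (1 + z) * exp (-I) = 1 / (1 + z) * (1 - exp (-I)) := by ring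
      _ ≤ 1 / (1 + z) * I :=
        mul_le_mul_of_nonneg_left (by linarith [add_one_le_exp (-I)]) (one_div_pos.2 h1z).le
      _ ≤ 1 / (1 + z) * (C * z ^ 2 / (2 * (1 + z) ^ 2)) :=
        mul_le_mul_of_nonneg_left (hF.integral_sub_div_le hz) (one_div_pos.2 h1z).le
      _ = C / 2 * z ^ 2 / (1 + z) ^ 3 := by field_simp

end LowerApproxInvOneAdd

theorem lowerApproxInvOneAdd_Fseq (k : ℕ) : LowerApproxInvOneAdd (2 / 2 ^ k) (Fseq k) := by
  induction k with
  | zero =>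
    rw [pow_zero, div_one]
    exact lowerApproxInvOneAdd_exp_neg
  | succ k ih =>
    rw [pow_succ, ← div_div]
    exact ih.fseqStep

/-- there is `M > 0` with
`0 ≤ 1/(1+z) − F_k(z) ≤ M·z²/(2^k·(1+z)³)` for all `k ≥ 0` and `z > −1`. -/
theorem Fseq_bounds :
    ∃ M : ℝ, 0 < M ∧ ∀ k : ℕ, ∀ z : ℝ, -1 < z →
      0 ≤ 1 / (1 + z) - Fseq k z ∧
      1 / (1 + z) - Fseq k z ≤ M * z ^ 2 / (2 ^ k * (1 + z) ^ 3) := by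
  refine ⟨2, two_pos, fun k z hz => ?_⟩
  have hk := lowerApproxInvOneAdd_Fseq k
  refine ⟨hk.sub_nonneg z hz, (hk.sub_le z hz).trans_eq ?_⟩
  field_simp

end
end
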